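/- Let Q be a query on a λ-graph. The spreading Q⇓ is a sharing equivalence if and only if there exists a sharing equivalence containing Q. -/
import Mathlib


/-- Directions for paths in a λ-graph. -/
inductive Dir : Type where
  | left | body | right
deriving DecidableEq

/-- Labels of nodes of a (pre–)λ-graph. -/
inductive NodeLabel (Node Name : Type) : Type where
  | app (l r : Node)
  | abs (body : Node)
  | fvar (name : Name)
  | bvar (binder : Node)

/-- The four kinds of nodes. -/
inductive NodeKind : Type where
  | app | abs | fvar | bvar
deriving DecidableEq

/-- The kind of a node label. -/
def NodeLabel.kind {Node Name : Type} : NodeLabel Node Name → NodeKind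
  | .app _ _ => .app
  | .abs _ => .abs
  | .fvar _ => .fvar
  | .bvar _ => .bvar

/-- Locally nameless λ-terms. -/
inductive Term (Name : Type) : Type where
  | bvar (i : ℕ)
  | fvar (a : Name)
  | app (t s : Term Name)
  | lam (t : Term Name)

/-- Reflexive–symmetric–transitive closure `R*` of a relation. -/
inductive RstClosure {α : Type _} (R : α → α → Prop) : α → α → Prop where
  | base {a b : α} : R a b → RstClosure R a b
  | refl (a : α) : RstClosure R a a
  | symm {a b : α} : RstClosure R a b → RstClosure R b a
  | trans {a b c : α} : RstClosure R a b → RstClosure R b c → RstClosure R a c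

/-- A pre–λ-graph: every node carries a label; the binder of a bound variable node is an
abstraction node; the name of a free variable node uniquely identifies it. -/
structure PreLamGraph (Node Name : Type) : Type where
  label : Node → NodeLabel Node Name
  binder_abs : ∀ n l, label n = .bvar l → ∃ b, label l = .abs b
  fvar_inj : ∀ n m a, label n = .fvar a → label m = .fvar a → n = m

namespace PreLamGraph

variable {Node Name : Type}

/-- `Path G τ n m`: there is a path from `n` to `m` with trace `τ`
(binding edges are never followed). -/
inductive Path (G : PreLamGraph Node Name) : List Dir → Node → Node → Prop where
  | nil (n : Node) : Path G [] n n
  | abs {τ : List Dir} {n m b : Node} :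
      Path G τ n m → G.label m = .abs b → Path G (.body :: τ) n b
  | appL {τ : List Dir} {n m l r : Node} :
      Path G τ n m → G.label m = .app l r → Path G (.left :: τ) n l
  | appR {τ : List Dir} {n m l r : Node} :
      Path G τ n m → G.label m = .app l r → Path G (.right :: τ) n r

/-- `r` is a root: the only path ending at `r` is the empty path from `r` itself. -/
def Root (G : PreLamGraph Node Name) (r : Node) : Prop :=
  ∀ (τ : List Dir) (n : Node), G.Path τ n r → τ = []

/-- `Crosses G τ n p`: the path from `n` with trace `τ` crosses the node `p`. -/
inductive Crosses (G : PreLamGraph Node Name) : List Dir → Node → Node → Prop where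
  | here {τ : List Dir} {n p : Node} : G.Path τ n p → Crosses G τ n p
  | step {d : Dir} {τ : List Dir} {n p m : Node} :
      Crosses G τ n p → G.Path (d :: τ) n m → Crosses G (d :: τ) n p

/-- `m` dominates `n`: every path from a root to `n` crosses `m`. -/
def Dominates (G : PreLamGraph Node Name) (m n : Node) : Prop :=
  ∀ (r : Node) (τ : List Dir), G.Root r → G.Path τ r n → G.Crosses τ r m

/-- Acyclicity: a path from a node to itself must have empty trace. -/
def Acyclic (G : PreLamGraph Node Name) : Prop :=
  ∀ (n : Node) (τ : List Dir), G.Path τ n n → τ = []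

/-- Every bound variable node is dominated by its binder. -/
def Dominated (G : PreLamGraph Node Name) : Prop :=
  ∀ (n l : Node), G.label n = .bvar l → G.Dominates l n

/-- A query relates only root nodes. -/
def IsQuery (G : PreLamGraph Node Name) (Q : Node → Node → Prop) : Prop :=
  ∀ n m, Q n m → G.Root n ∧ G.Root m

/-- A relation is homogeneous if it only relates nodes of the same kind. -/
def Homogeneous (G : PreLamGraph Node Name) (R : Node → Node → Prop) : Prop :=
  ∀ n m, R n m → (G.label n).kind = (G.label m).kind

/-- Closure under the left propagation rule. -/
def ClosedAppL (G : PreLamGraph Node Name) (R : Node → Node → Prop) : Prop :=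
  ∀ n m n1 n2 m1 m2, G.label n = .app n1 n2 → G.label m = .app m1 m2 → R n m → R n1 m1

/-- Closure under the right propagation rule. -/
def ClosedAppR (G : PreLamGraph Node Name) (R : Node → Node → Prop) : Prop :=
  ∀ n m n1 n2 m1 m2, G.label n = .app n1 n2 → G.label m = .app m1 m2 → R n m → R n2 m2

/-- Closure under the body propagation rule. -/
def ClosedAbs (G : PreLamGraph Node Name) (R : Node → Node → Prop) : Prop :=
  ∀ n m n' m', G.label n = .abs n' → G.label m = .abs m' → R n m → R n' m'

/-- Closure under the scoping rule. -/
def ClosedScope (G : PreLamGraph Node Name) (R : Node → Node → Prop) : Prop :=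
  ∀ n m l l', G.label n = .bvar l → G.label m = .bvar l' → R n m → R l l'

/-- Closure under the three propagation rules. -/
def ClosedProp (G : PreLamGraph Node Name) (R : Node → Node → Prop) : Prop :=
  G.ClosedAppL R ∧ G.ClosedAppR R ∧ G.ClosedAbs R

/-- A blind bisimulation is a homogeneous relation closed under the propagation rules. -/
def BlindBisimulation (G : PreLamGraph Node Name) (R : Node → Node → Prop) : Prop :=
  G.Homogeneous R ∧ G.ClosedProp R

/-- A bisimulation is a homogeneous relation closed under the propagation rules
and the scoping rule. -/
def Bisimulation (G : PreLamGraph Node Name) (R : Node → Node → Prop) : Prop :=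
  G.BlindBisimulation R ∧ G.ClosedScope R

/-- A relation is open if whenever it relates two free variable nodes they are equal. -/
def OpenRel (G : PreLamGraph Node Name) (R : Node → Node → Prop) : Prop :=
  ∀ n m a b, G.label n = .fvar a → G.label m = .fvar b → R n m → n = m

/-- A sharing equivalence is an open bisimulation that is also an equivalence relation. -/
def SharingEquivalence (G : PreLamGraph Node Name) (R : Node → Node → Prop) : Prop :=
  G.OpenRel R ∧ G.Bisimulation R ∧ Equivalence R

/-- A blind sharing equivalence is an equivalence relation that is a blind bisimulation. -/
def BlindSharingEquivalence (G : PreLamGraph Node Name) (R : Node → Node → Prop) : Prop :=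
  Equivalence R ∧ G.BlindBisimulation R

/-- The propagation `R↓`: the smallest relation containing `R` and closed under the
propagation rules. -/
inductive Propagation (G : PreLamGraph Node Name) (R : Node → Node → Prop) :
    Node → Node → Prop where
  | base {n m : Node} : R n m → Propagation G R n m
  | appL {n m n1 n2 m1 m2 : Node} :
      Propagation G R n m → G.label n = .app n1 n2 → G.label m = .app m1 m2 →
      Propagation G R n1 m1
  | appR {n m n1 n2 m1 m2 : Node} :
      Propagation G R n m → G.label n = .app n1 n2 → G.label m = .app m1 m2 →
      Propagation G R n2 m2
  | abs {n m n' m' : Node} :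
      Propagation G R n m → G.label n = .abs n' → G.label m = .abs m' →
      Propagation G R n' m'

/-- The spreading `R⇓`: the smallest equivalence relation containing `R` and closed
under the propagation rules. -/
inductive Spreading (G : PreLamGraph Node Name) (R : Node → Node → Prop) :
    Node → Node → Prop where
  | base {n m : Node} : R n m → Spreading G R n m
  | refl (n : Node) : Spreading G R n n
  | symm {n m : Node} : Spreading G R n m → Spreading G R m n
  | trans {n m p : Node} : Spreading G R n m → Spreading G R m p → Spreading G R n p
  | appL {n m n1 n2 m1 m2 : Node} :
      Spreading G R n m → G.label n = .app n1 n2 → G.label m = .app m1 m2 →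
      Spreading G R n1 m1
  | appR {n m n1 n2 m1 m2 : Node} :
      Spreading G R n m → G.label n = .app n1 n2 → G.label m = .app m1 m2 →
      Spreading G R n2 m2
  | abs {n m n' m' : Node} :
      Spreading G R n m → G.label n = .abs n' → G.label m = .abs m' →
      Spreading G R n' m'

/-- `IndexOf G l n τ k`: the de Bruijn index of the abstraction node `l` along the path
from `n` with trace `τ` (which crosses `l`) is `k`. -/
inductive IndexOf (G : PreLamGraph Node Name) (l n : Node) : List Dir → ℕ → Prop where
  | here {τ : List Dir} : G.Path τ n l → IndexOf G l n τ 0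
  | abs {d : Dir} {τ : List Dir} {m b : Node} {k : ℕ} :
      G.Path (d :: τ) n m → G.label m = .abs b → m ≠ l →
      IndexOf G l n τ k → IndexOf G l n (d :: τ) (k + 1)
  | other {d : Dir} {τ : List Dir} {m : Node} {k : ℕ} :
      G.Path (d :: τ) n m → (∀ b, G.label m ≠ .abs b) →
      IndexOf G l n τ k → IndexOf G l n (d :: τ) k

/-- `Readback G r τ t`: the readback of the endpoint of the access path from `r` with
trace `τ` is the locally nameless term `t`. -/
inductive Readback (G : PreLamGraph Node Name) (r : Node) : List Dir → Term Name → Prop where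
  | bvar {τ : List Dir} {n l : Node} {k : ℕ} :
      G.Path τ r n → G.label n = .bvar l → G.IndexOf l r τ k →
      Readback G r τ (.bvar k)
  | fvar {τ : List Dir} {n : Node} {a : Name} :
      G.Path τ r n → G.label n = .fvar a → Readback G r τ (.fvar a)
  | abs {τ : List Dir} {n b : Node} {t : Term Name} :
      G.Path τ r n → G.label n = .abs b → Readback G r (.body :: τ) t →
      Readback G r τ (.lam t)
  | app {τ : List Dir} {n n1 n2 : Node} {t1 t2 : Term Name} :
      G.Path τ r n → G.label n = .app n1 n2 →
      Readback G r (.left :: τ) t1 → Readback G r (.right :: τ) t2 →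
      Readback G r τ (.app t1 t2)

end PreLamGraph

/-- A λ-graph: a finite, acyclic and dominated pre–λ-graph. -/
structure LamGraph (Node Name : Type) extends PreLamGraph Node Name where
  finite : Finite Node
  acyclic : toPreLamGraph.Acyclic
  dominated : toPreLamGraph.Dominated

namespace PreLamGraph

variable {Node Name : Type} {G : PreLamGraph Node Name}

lemma my_path_det {τ : List Dir} {n a b : Node} (h1 : G.Path τ n a) (h2 : G.Path τ n b) :
    a = b := by
  induction h1 generalizing b with
  | nil => cases h2; rfl
  | abs hp hl ih =>
    cases h2 with
    | abs hp' hl' => obtain rfl := ih hp'; rw [hl] at hl'; cases hl'; rfl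
  | appL hp hl ih =>
    cases h2 with
    | appL hp' hl' => obtain rfl := ih hp'; rw [hl] at hl'; cases hl'; rfl
  | appR hp hl ih =>
    cases h2 with
    | appR hp' hl' => obtain rfl := ih hp'; rw [hl] at hl'; cases hl'; rfl

lemma my_path_comp {δ : List Dir} {m p : Node} (h2 : G.Path δ m p) :
    ∀ {σ : List Dir} {n : Node}, G.Path σ n m → G.Path (δ ++ σ) n p := by
  induction h2 with
  | nil => exact fun h1 => h1
  | abs hp hl ih => exact fun h1 => .abs (ih h1) hl
  | appL hp hl ih => exact fun h1 => .appL (ih h1) hl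
  | appR hp hl ih => exact fun h1 => .appR (ih h1) hl

lemma my_path_sub {δ σ : List Dir} {n x y : Node} (h : G.Path (δ ++ σ) n x)
    (h2 : G.Path σ n y) : G.Path δ y x := by
  induction δ generalizing x with
  | nil => obtain rfl := my_path_det h h2; exact .nil _
  | cons d δ ih =>
    cases h with
    | abs hp hl => exact .abs (ih hp) hl
    | appL hp hl => exact .appL (ih hp) hl
    | appR hp hl => exact .appR (ih hp) hl

lemma my_crosses {τ : List Dir} {n p : Node} (h : G.Crosses τ n p) :
    ∃ σ, σ <:+ τ ∧ G.Path σ n p := by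
  induction h with
  | here hp => exact ⟨_, List.suffix_refl _, hp⟩
  | step hc hp ih =>
    obtain ⟨σ, hs, hps⟩ := ih
    exact ⟨σ, hs.trans (List.suffix_cons _ _), hps⟩

lemma my_suffix_total {σ σ2 τ : List Dir} (h : σ <:+ τ) (h2 : σ2 <:+ τ) :
    σ <:+ σ2 ∨ σ2 <:+ σ := by
  rw [List.suffix_iff_eq_drop] at h h2
  rcases le_total (τ.length - σ.length) (τ.length - σ2.length) with hle | hle
  · right
    obtain ⟨k, hk⟩ := Nat.le.dest hle
    rw [h2, ← hk, ← List.drop_drop, ← h]; exact List.drop_suffix _ _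
  · left
    obtain ⟨k, hk⟩ := Nat.le.dest hle
    rw [h, ← hk, ← List.drop_drop, ← h2]; exact List.drop_suffix _ _

lemma my_kind_app {n : Node} (h : (G.label n).kind = NodeKind.app) :
    ∃ a b, G.label n = .app a b := by
  rcases hl : G.label n with ⟨a, b⟩ | b | a | l
  · exact ⟨a, b, rfl⟩
  all_goals simp [hl, NodeLabel.kind] at h

lemma my_kind_abs {n : Node} (h : (G.label n).kind = NodeKind.abs) :
    ∃ b, G.label n = .abs b := by
  rcases hl : G.label n with ⟨a, b⟩ | b | a | l
  · simp [hl, NodeLabel.kind] at h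
  · exact ⟨b, rfl⟩
  all_goals simp [hl, NodeLabel.kind] at h

lemma my_kind_bvar {n : Node} (h : (G.label n).kind = NodeKind.bvar) :
    ∃ l, G.label n = .bvar l := by
  rcases hl : G.label n with ⟨a, b⟩ | b | a | l
  · simp [hl, NodeLabel.kind] at h
  · simp [hl, NodeLabel.kind] at h
  · simp [hl, NodeLabel.kind] at h
  · exact ⟨l, rfl⟩

lemma my_pairing {R : Node → Node → Prop} (hhom : G.Homogeneous R)
    (hL : G.ClosedAppL R) (hR : G.ClosedAppR R) (hA : G.ClosedAbs R)
    {x a : Node} {σ : List Dir} (hp : G.Path σ x a) :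
    ∀ {y : Node}, R x y → ∃ b, G.Path σ y b ∧ R a b := by
  induction hp with
  | nil => exact fun hxy => ⟨_, .nil _, hxy⟩
  | abs hp hl ih =>
    intro y hxy
    obtain ⟨c, hpc, hrc⟩ := ih hxy
    have hk := hhom _ _ hrc
    rw [hl] at hk
    simp only [NodeLabel.kind] at hk
    obtain ⟨c', hc'⟩ := my_kind_abs hk.symm
    exact ⟨c', .abs hpc hc', hA _ _ _ _ hl hc' hrc⟩
  | appL hp hl ih =>
    intro y hxy
    obtain ⟨c, hpc, hrc⟩ := ih hxy
    have hk := hhom _ _ hrc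
    rw [hl] at hk
    simp only [NodeLabel.kind] at hk
    obtain ⟨c1, c2, hc'⟩ := my_kind_app hk.symm
    exact ⟨c1, .appL hpc hc', hL _ _ _ _ _ _ hl hc' hrc⟩
  | appR hp hl ih =>
    intro y hxy
    obtain ⟨c, hpc, hrc⟩ := ih hxy
    have hk := hhom _ _ hrc
    rw [hl] at hk
    simp only [NodeLabel.kind] at hk
    obtain ⟨c1, c2, hc'⟩ := my_kind_app hk.symm
    exact ⟨c2, .appR hpc hc', hR _ _ _ _ _ _ hl hc' hrc⟩

lemma my_no_path (hfin : Finite Node) (hacyc : G.Acyclic)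
    {R : Node → Node → Prop} (hhom : G.Homogeneous R)
    (hL : G.ClosedAppL R) (hR : G.ClosedAppR R) (hA : G.ClosedAbs R)
    {x y : Node} {δ : List Dir} (hxy : R x y) (hp : G.Path δ x y) : δ = [] := by
  by_contra hne
  haveI : Finite Node := hfin
  let r : Node → Node → Prop := fun b a => ∃ γ, γ ≠ [] ∧ G.Path γ a b
  have htr : ∀ a b c, r a b → r b c → r a c := by
    rintro a b c ⟨γ1, h1, hp1⟩ ⟨γ2, h2, hp2⟩
    exact ⟨γ1 ++ γ2, by simp [h1], my_path_comp hp1 hp2⟩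
  have hirr : ∀ a, ¬ r a a := by
    rintro a ⟨γ, h1, hp1⟩
    exact h1 (hacyc _ _ hp1)
  have hwf : WellFounded r :=
    @Finite.wellFounded_of_trans_of_irrefl Node _ r ⟨htr⟩ ⟨hirr⟩
  have key : ∀ u, ∀ v, R u v → G.Path δ u v → False := by
    intro u
    induction u using hwf.induction with
    | _ u ih =>
      intro v huv hpv
      obtain ⟨b, hpb, hrb⟩ := my_pairing hhom hL hR hA hpv huv
      exact ih v ⟨δ, hne, hpv⟩ b hrb hpb
  exact key x y hxy hp

lemma my_prop_char {Q : Node → Node → Prop} {n m : Node} (h : Propagation G Q n m) :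
    ∃ n0 m0 τ, Q n0 m0 ∧ G.Path τ n0 n ∧ G.Path τ m0 m := by
  induction h with
  | base h => exact ⟨_, _, [], h, .nil _, .nil _⟩
  | appL h h1 h2 ih =>
    obtain ⟨n0, m0, τ, hq, p1, p2⟩ := ih
    exact ⟨n0, m0, _, hq, .appL p1 h1, .appL p2 h2⟩
  | appR h h1 h2 ih =>
    obtain ⟨n0, m0, τ, hq, p1, p2⟩ := ih
    exact ⟨n0, m0, _, hq, .appR p1 h1, .appR p2 h2⟩
  | abs h h1 h2 ih =>
    obtain ⟨n0, m0, τ, hq, p1, p2⟩ := ih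
    exact ⟨n0, m0, _, hq, .abs p1 h1, .abs p2 h2⟩

end PreLamGraph

open PreLamGraph in
/-- Universality of `Q⇓` for sharing equivalences. -/
theorem spreading_sharing_equivalence_iff {Node Name : Type} (G : LamGraph Node Name)
    (Q : Node → Node → Prop) (hQ : G.toPreLamGraph.IsQuery Q) :
    G.toPreLamGraph.SharingEquivalence (Spreading G.toPreLamGraph Q) ↔
      ∃ E : Node → Node → Prop, G.toPreLamGraph.SharingEquivalence E ∧
        ∀ n m, Q n m → E n m := by
  constructor
  · intro hS
    exact ⟨Spreading G.toPreLamGraph Q, hS, fun n m h => .base h⟩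
  · rintro ⟨E, ⟨hopen, ⟨⟨hhom, hL, hR, hA⟩, hscope⟩, heq⟩, hsub⟩
    have hsprE : ∀ {n m}, Spreading G.toPreLamGraph Q n m → E n m := by
      intro n m h
      induction h with
      | base h => exact hsub _ _ h
      | refl n => exact heq.refl n
      | symm _ ih => exact heq.symm ih
      | trans _ _ ih1 ih2 => exact heq.trans ih1 ih2
      | appL _ h1 h2 ih => exact hL _ _ _ _ _ _ h1 h2 ih
      | appR _ h1 h2 ih => exact hR _ _ _ _ _ _ h1 h2 ih
      | abs _ h1 h2 ih => exact hA _ _ _ _ h1 h2 ih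
    have hpropE : ∀ {n m}, Propagation G.toPreLamGraph Q n m → E n m := by
      intro n m h
      induction h with
      | base h => exact hsub _ _ h
      | appL _ h1 h2 ih => exact hL _ _ _ _ _ _ h1 h2 ih
      | appR _ h1 h2 ih => exact hR _ _ _ _ _ _ h1 h2 ih
      | abs _ h1 h2 ih => exact hA _ _ _ _ h1 h2 ih
    have hrstE : ∀ {n m}, RstClosure (Propagation G.toPreLamGraph Q) n m → E n m := by
      intro n m h
      induction h with
      | base h => exact hpropE h
      | refl a => exact heq.refl a
      | symm _ ih => exact heq.symm ih
      | trans _ _ ih1 ih2 => exact heq.trans ih1 ih2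
    have hsprHom : G.toPreLamGraph.Homogeneous (Spreading G.toPreLamGraph Q) :=
      fun n m h => hhom n m (hsprE h)
    have hrstHom : ∀ {n m}, RstClosure (Propagation G.toPreLamGraph Q) n m →
        (G.toPreLamGraph.label n).kind = (G.toPreLamGraph.label m).kind :=
      fun h => hhom _ _ (hrstE h)
    have scope_prop : ∀ {n m l l'}, Propagation G.toPreLamGraph Q n m →
        G.toPreLamGraph.label n = .bvar l → G.toPreLamGraph.label m = .bvar l' →
        Spreading G.toPreLamGraph Q l l' := by
      intro n m l l' h hn hm
      obtain ⟨n0, m0, τ, hq, p1, p2⟩ := my_prop_char h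
      obtain ⟨hr1, hr2⟩ := hQ _ _ hq
      obtain ⟨σ, hsτ, hσ⟩ := my_crosses (G.dominated n l hn n0 τ hr1 p1)
      obtain ⟨σ', hsτ', hσ'⟩ := my_crosses (G.dominated m l' hm m0 τ hr2 p2)
      have hspr0 : Spreading G.toPreLamGraph Q m0 n0 := .symm (.base hq)
      obtain ⟨a, hpa, hra⟩ := my_pairing hsprHom
        (fun n m n1 n2 m1 m2 h1 h2 h => .appL h h1 h2)
        (fun n m n1 n2 m1 m2 h1 h2 h => .appR h h1 h2)
        (fun n m n' m' h1 h2 h => .abs h h1 h2) hσ' hspr0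
      have hEll' : E l l' := hscope _ _ _ _ hn hm (hpropE h)
      have hEla : E l a := heq.trans hEll' (hsprE hra)
      rcases my_suffix_total hsτ hsτ' with hss | hss
      · obtain ⟨δ, rfl⟩ := hss
        have hpath := my_path_sub hpa hσ
        have hδ := my_no_path G.finite G.acyclic hhom hL hR hA hEla hpath
        subst hδ
        cases hpath
        exact .symm hra
      · obtain ⟨δ, rfl⟩ := hss
        have hpath := my_path_sub hσ hpa
        have hδ := my_no_path G.finite G.acyclic hhom hL hR hA (heq.symm hEla) hpath
        subst hδ
        cases hpath
        exact .symm hra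
    have rst_appL : ∀ {n m}, RstClosure (Propagation G.toPreLamGraph Q) n m →
        ∀ {n1 n2 m1 m2}, G.toPreLamGraph.label n = .app n1 n2 →
        G.toPreLamGraph.label m = .app m1 m2 →
        RstClosure (Propagation G.toPreLamGraph Q) n1 m1 := by
      intro n m h
      induction h with
      | base h => exact fun h1 h2 => .base (.appL h h1 h2)
      | refl a => intro n1 n2 m1 m2 h1 h2; rw [h1] at h2; cases h2; exact .refl _
      | symm _ ih => exact fun h1 h2 => .symm (ih h2 h1)
      | trans hab hbc ih1 ih2 =>
        intro n1 n2 m1 m2 h1 h2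
        have hk := hrstHom hab
        rw [h1] at hk
        simp only [NodeLabel.kind] at hk
        obtain ⟨b1, b2, hb⟩ := my_kind_app hk.symm
        exact .trans (ih1 h1 hb) (ih2 hb h2)
    have rst_appR : ∀ {n m}, RstClosure (Propagation G.toPreLamGraph Q) n m →
        ∀ {n1 n2 m1 m2}, G.toPreLamGraph.label n = .app n1 n2 →
        G.toPreLamGraph.label m = .app m1 m2 →
        RstClosure (Propagation G.toPreLamGraph Q) n2 m2 := by
      intro n m h
      induction h with
      | base h => exact fun h1 h2 => .base (.appR h h1 h2)
      | refl a => intro n1 n2 m1 m2 h1 h2; rw [h1] at h2; cases h2; exact .refl _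
      | symm _ ih => exact fun h1 h2 => .symm (ih h2 h1)
      | trans hab hbc ih1 ih2 =>
        intro n1 n2 m1 m2 h1 h2
        have hk := hrstHom hab
        rw [h1] at hk
        simp only [NodeLabel.kind] at hk
        obtain ⟨b1, b2, hb⟩ := my_kind_app hk.symm
        exact .trans (ih1 h1 hb) (ih2 hb h2)
    have rst_abs : ∀ {n m}, RstClosure (Propagation G.toPreLamGraph Q) n m →
        ∀ {n' m'}, G.toPreLamGraph.label n = .abs n' →
        G.toPreLamGraph.label m = .abs m' →
        RstClosure (Propagation G.toPreLamGraph Q) n' m' := by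
      intro n m h
      induction h with
      | base h => exact fun h1 h2 => .base (.abs h h1 h2)
      | refl a => intro n' m' h1 h2; rw [h1] at h2; cases h2; exact .refl _
      | symm _ ih => exact fun h1 h2 => .symm (ih h2 h1)
      | trans hab hbc ih1 ih2 =>
        intro n' m' h1 h2
        have hk := hrstHom hab
        rw [h1] at hk
        simp only [NodeLabel.kind] at hk
        obtain ⟨b1, hb⟩ := my_kind_abs hk.symm
        exact .trans (ih1 h1 hb) (ih2 hb h2)
    have spr_rst : ∀ {n m}, Spreading G.toPreLamGraph Q n m →
        RstClosure (Propagation G.toPreLamGraph Q) n m := by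
      intro n m h
      induction h with
      | base h => exact .base (.base h)
      | refl n => exact .refl n
      | symm _ ih => exact .symm ih
      | trans _ _ ih1 ih2 => exact .trans ih1 ih2
      | appL _ h1 h2 ih => exact rst_appL ih h1 h2
      | appR _ h1 h2 ih => exact rst_appR ih h1 h2
      | abs _ h1 h2 ih => exact rst_abs ih h1 h2
    have scope_rst : ∀ {n m}, RstClosure (Propagation G.toPreLamGraph Q) n m →
        ∀ {l l'}, G.toPreLamGraph.label n = .bvar l →
        G.toPreLamGraph.label m = .bvar l' → Spreading G.toPreLamGraph Q l l' := by
      intro n m h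
      induction h with
      | base h => exact fun h1 h2 => scope_prop h h1 h2
      | refl a => intro l l' h1 h2; rw [h1] at h2; cases h2; exact .refl _
      | symm _ ih => exact fun h1 h2 => .symm (ih h2 h1)
      | trans hab hbc ih1 ih2 =>
        intro l l' h1 h2
        have hk := hrstHom hab
        rw [h1] at hk
        simp only [NodeLabel.kind] at hk
        obtain ⟨lb, hb⟩ := my_kind_bvar hk.symm
        exact .trans (ih1 h1 hb) (ih2 hb h2)
    refine ⟨?_, ⟨⟨hsprHom, ?_, ?_, ?_⟩, ?_⟩, ?_⟩
    · exact fun n m a b h1 h2 h => hopen n m a b h1 h2 (hsprE h)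
    · exact fun n m n1 n2 m1 m2 h1 h2 h => .appL h h1 h2
    · exact fun n m n1 n2 m1 m2 h1 h2 h => .appR h h1 h2
    · exact fun n m n' m' h1 h2 h => .abs h h1 h2
    · exact fun n m l l' h1 h2 h => scope_rst (spr_rst h) h1 h2
    · exact ⟨.refl, fun h => .symm h, fun h1 h2 => .trans h1 h2⟩
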